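/- arXiv:1703.06592 — 3 statements merged into one kernel-verified Lean document; each statement's English description precedes it below -/
import Mathlib

section
/- For real numbers a, b (nonzero) and bits v, w ∈ {0,1}: τ(a, v⊕w) + τ(b, w) = τ(Q(a,b), v) + τ(P(v, a, b), w), where Q(a,b) = sgn(a)sgn(b)min(|a|,|b|) and P(v,a,b) = (-1)^v a + b, provided P(v,a,b) ≠ 0. -/
noncomputable def sgn (x : ℝ) : ℝ := if 0 ≤ x then 1 else -1

noncomputable def tau (S : ℝ) (v : Bool) : ℝ :=
  if sgn S = (if v then (-1 : ℝ) else 1) then 0 else -|S|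

noncomputable def Q (a b : ℝ) : ℝ := sgn a * sgn b * min |a| |b|

noncomputable def polarP (v : Bool) (a b : ℝ) : ℝ := (if v then -a else a) + b

lemma tau_eq_min (S : ℝ) (v : Bool) : tau S v = min (if v then -S else S) 0 := by
  cases v <;> simp only [tau, sgn] <;> split_ifs <;>
    simp_all [abs_of_nonneg, abs_of_neg, le_of_lt, min_def] <;>
    rcases abs_cases S with ⟨h1,h2⟩|⟨h1,h2⟩ <;> linarith

set_option maxHeartbeats 1000000 in
lemma core (a b : ℝ) (w : Bool) :
    min (if w then -a else a) 0 + min (if w then -b else b) 0 =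
    min (Q a b) 0 + min (if w then -(a+b) else a+b) 0 := by
  rcases le_or_gt 0 a with ha | ha <;> rcases le_or_gt 0 b with hb | hb
  · simp only [Q, sgn, if_pos ha, if_pos hb, abs_of_nonneg ha, abs_of_nonneg hb]
    all_goals cases w <;>
      simp only [if_true, if_false, one_mul, neg_one_mul, mul_neg, neg_neg, mul_one, neg_mul,
        min_def] <;>
      split_ifs <;> linarith
  · simp only [Q, sgn, if_pos ha, if_neg (not_le.mpr hb), abs_of_nonneg ha, abs_of_neg hb]
    all_goals cases w <;>
      simp only [if_true, if_false, one_mul, neg_one_mul, mul_neg, neg_neg, mul_one, neg_mul,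
        min_def] <;>
      split_ifs <;> linarith
  · simp only [Q, sgn, if_neg (not_le.mpr ha), if_pos hb, abs_of_neg ha, abs_of_nonneg hb]
    all_goals cases w <;>
      simp only [if_true, if_false, one_mul, neg_one_mul, mul_neg, neg_neg, mul_one, neg_mul,
        min_def] <;>
      split_ifs <;> linarith
  · simp only [Q, sgn, if_neg (not_le.mpr ha), if_neg (not_le.mpr hb), abs_of_neg ha,
      abs_of_neg hb]
    all_goals cases w <;>
      simp only [if_true, if_false, one_mul, neg_one_mul, mul_neg, neg_neg, mul_one, neg_mul,
        min_def] <;>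
      split_ifs <;> linarith


lemma Q_neg (a b : ℝ) (ha : a ≠ 0) : Q (-a) b = - Q a b := by
  rcases ha.lt_or_gt with h | h <;> rcases le_or_gt 0 b with hb | hb
  · simp [Q, sgn, abs_neg, h.le, not_le.mpr h, hb]; try ring
  · simp [Q, sgn, abs_neg, h.le, not_le.mpr h, not_le.mpr hb]; try ring
  · simp [Q, sgn, abs_neg, h.le, not_le.mpr h, hb]; try ring
  · simp [Q, sgn, abs_neg, h.le, not_le.mpr h, not_le.mpr hb]; try ring

/-- Two-step penalty decomposition:
`τ(a, v⊕w) + τ(b, w) = τ(Q(a,b), v) + τ(P(v,a,b), w)`. -/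
theorem stmt_4 (a b : ℝ) (ha : a ≠ 0) (hb : b ≠ 0) (v w : Bool)
    (hP : polarP v a b ≠ 0) :
    tau a (xor v w) + tau b w = tau (Q a b) v + tau (polarP v a b) w := by
  simp only [tau_eq_min]
  cases v
  · simpa [polarP] using core a b w
  · have h := core (-a) b w
    rw [Q_neg a b ha] at h
    cases w <;> simpa [polarP] using h
end

section
/- Let A and B be independent real random variables with CDFs F_A and F_B. Define C = sgn(A)·sgn(B)·min(|A|,|B|) with sgn(x)=1 for x≥0, -1 for x<0. If F_A = F_B = F and the distributions are atomless, then the CDF of C is given by: F_C(x) = 2F(x)(1 - F(-x)) for x < 0, and F_C(x) = 2F(x) - F(-x)² - F(x)² for x ≥ 0. -/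
lemma Qle_neg' (a b x : ℝ) (hx : x < 0) :
    sgn a * sgn b * min |a| |b| ≤ x ↔ (a ≤ x ∧ -x ≤ b) ∨ (-x ≤ a ∧ b ≤ x) := by
  simp only [sgn]
  split_ifs with ha hb hb
  · rw [abs_of_nonneg ha, abs_of_nonneg hb]
    constructor
    · intro h
      have h' : min a b ≤ x := by linarith
      exfalso; rcases min_le_iff.mp h' with h'' | h'' <;> linarith
    · rintro (⟨h1, h2⟩ | ⟨h1, h2⟩) <;> exfalso <;> linarith
  · rw [abs_of_nonneg ha, abs_of_neg (not_le.mp hb)]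
    constructor
    · intro h
      have h' : -x ≤ min a (-b) := by linarith
      exact Or.inr ⟨le_trans h' (min_le_left _ _),
        by linarith [le_trans h' (min_le_right a (-b))]⟩
    · rintro (⟨h1, h2⟩ | ⟨h1, h2⟩)
      · exfalso; linarith
      · have h' : -x ≤ min a (-b) := le_min h1 (by linarith)
        linarith
  · rw [abs_of_neg (not_le.mp ha), abs_of_nonneg hb]
    constructor
    · intro h
      have h' : -x ≤ min (-a) b := by linarith
      exact Or.inl ⟨by linarith [le_trans h' (min_le_left (-a) b)],
        le_trans h' (min_le_right _ _)⟩
    · rintro (⟨h1, h2⟩ | ⟨h1, h2⟩)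
      · have h' : -x ≤ min (-a) b := le_min (by linarith) h2
        linarith
      · exfalso; linarith [not_le.mp ha]
  · rw [abs_of_neg (not_le.mp ha), abs_of_neg (not_le.mp hb)]
    constructor
    · intro h
      have h' : min (-a) (-b) ≤ x := by linarith
      exfalso
      rcases min_le_iff.mp h' with h'' | h'' <;> [linarith [not_le.mp ha]; linarith [not_le.mp hb]]
    · rintro (⟨h1, h2⟩ | ⟨h1, h2⟩) <;> exfalso <;>
        [linarith [not_le.mp hb]; linarith [not_le.mp ha]]

lemma Qgt_nonneg' (a b x : ℝ) (hx : 0 ≤ x) :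
    x < sgn a * sgn b * min |a| |b| ↔ (x < a ∧ x < b) ∨ (a < -x ∧ b < -x) := by
  simp only [sgn]
  split_ifs with ha hb hb
  · rw [abs_of_nonneg ha, abs_of_nonneg hb]
    constructor
    · intro h
      have h' : x < min a b := by linarith
      exact Or.inl ⟨lt_of_lt_of_le h' (min_le_left _ _), lt_of_lt_of_le h' (min_le_right _ _)⟩
    · rintro (⟨h1, h2⟩ | ⟨h1, h2⟩)
      · have := lt_min h1 h2; linarith
      · exfalso; linarith
  · rw [abs_of_nonneg ha, abs_of_neg (not_le.mp hb)]
    constructor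
    · intro h
      exfalso
      have h0 : (0:ℝ) ≤ min a (-b) := le_min ha (by linarith [not_le.mp hb])
      linarith
    · rintro (⟨h1, h2⟩ | ⟨h1, h2⟩) <;> exfalso <;>
        [linarith [not_le.mp hb]; linarith]
  · rw [abs_of_neg (not_le.mp ha), abs_of_nonneg hb]
    constructor
    · intro h
      exfalso
      have h0 : (0:ℝ) ≤ min (-a) b := le_min (by linarith [not_le.mp ha]) hb
      linarith
    · rintro (⟨h1, h2⟩ | ⟨h1, h2⟩) <;> exfalso <;>
        [linarith [not_le.mp ha]; linarith]
  · rw [abs_of_neg (not_le.mp ha), abs_of_neg (not_le.mp hb)]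
    constructor
    · intro h
      have h' : x < min (-a) (-b) := by linarith
      exact Or.inr ⟨by linarith [lt_of_lt_of_le h' (min_le_left (-a) (-b))],
        by linarith [lt_of_lt_of_le h' (min_le_right (-a) (-b))]⟩
    · rintro (⟨h1, h2⟩ | ⟨h1, h2⟩)
      · exfalso; linarith [not_le.mp ha]
      · have h' : x < min (-a) (-b) := lt_min (by linarith) (by linarith)
        linarith

open MeasureTheory in
/-- Density evolution rule (eq. (18)): for i.i.d. atomless `A, B` with common CDF
`F`, the CDF of `C = sgn(A)sgn(B)min(|A|,|B|)` equals `2F(x)(1-F(-x))` for `x<0`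
and `2F(x) - F(-x)² - F(x)²` for `x ≥ 0`. -/
theorem stmt_9 {Ω : Type*} [MeasurableSpace Ω] (μ : Measure Ω)
    [IsProbabilityMeasure μ] (A B : Ω → ℝ) (hA : Measurable A) (hB : Measurable B)
    (hInd : ProbabilityTheory.IndepFun A B μ)
    (hId : Measure.map A μ = Measure.map B μ)
    (hAtomless : ∀ x : ℝ, μ {ω | A ω = x} = 0)
    (F : ℝ → ℝ) (hF : ∀ x, F x = (μ {ω | A ω ≤ x}).toReal)
    (C : Ω → ℝ) (hC : ∀ ω, C ω = sgn (A ω) * sgn (B ω) * min |A ω| |B ω|) :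
    ∀ x : ℝ, (μ {ω | C ω ≤ x}).toReal =
      if x < 0 then 2 * F x * (1 - F (-x))
      else 2 * F x - F (-x) ^ 2 - F x ^ 2 := by
  have hBs : ∀ s : Set ℝ, MeasurableSet s → μ (B ⁻¹' s) = μ (A ⁻¹' s) := by
    intro s hs
    rw [← Measure.map_apply hB hs, ← hId, Measure.map_apply hA hs]
  have hIio : ∀ y : ℝ, μ (A ⁻¹' Set.Iio y) = μ (A ⁻¹' Set.Iic y) := by
    intro y
    have hu : A ⁻¹' Set.Iic y = A ⁻¹' Set.Iio y ∪ {ω | A ω = y} := by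
      ext ω; simp [le_iff_lt_or_eq]
    rw [hu]
    refine le_antisymm (measure_mono Set.subset_union_left) ?_
    calc μ (A ⁻¹' Set.Iio y ∪ {ω | A ω = y}) ≤ μ (A ⁻¹' Set.Iio y) + μ {ω | A ω = y} :=
          measure_union_le _ _
      _ = μ (A ⁻¹' Set.Iio y) := by rw [hAtomless y, add_zero]
  have hIci : ∀ y : ℝ, μ (A ⁻¹' Set.Ici y) = 1 - μ (A ⁻¹' Set.Iic y) := by
    intro y
    rw [← Set.compl_Iio, Set.preimage_compl,
      measure_compl (hA measurableSet_Iio) (measure_ne_top _ _), measure_univ, hIio]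
  have hFeq : ∀ y : ℝ, (μ (A ⁻¹' Set.Iic y)).toReal = F y := by
    intro y; rw [hF y]; rfl
  have hsub : ∀ y : ℝ, ((1 : ENNReal) - μ (A ⁻¹' Set.Iic y)).toReal = 1 - F y := by
    intro y
    rw [ENNReal.toReal_sub_of_le prob_le_one ENNReal.one_ne_top, ENNReal.toReal_one, hFeq]
  intro x
  split_ifs with hx
  · -- x < 0
    have hset : {ω | C ω ≤ x} =
        (A ⁻¹' Set.Iic x ∩ B ⁻¹' Set.Ici (-x)) ∪ (A ⁻¹' Set.Ici (-x) ∩ B ⁻¹' Set.Iic x) := by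
      ext ω
      simp only [Set.mem_setOf_eq, hC, Set.mem_union, Set.mem_inter_iff, Set.mem_preimage,
        Set.mem_Iic, Set.mem_Ici]
      exact Qle_neg' _ _ _ hx
    have hdisj : Disjoint (A ⁻¹' Set.Iic x ∩ B ⁻¹' Set.Ici (-x))
        (A ⁻¹' Set.Ici (-x) ∩ B ⁻¹' Set.Iic x) := by
      rw [Set.disjoint_left]
      rintro ω ⟨h1, h2⟩ ⟨h3, h4⟩
      simp only [Set.mem_preimage, Set.mem_Iic, Set.mem_Ici] at h1 h3
      linarith
    have hm2 : MeasurableSet (A ⁻¹' Set.Ici (-x) ∩ B ⁻¹' Set.Iic x) :=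
      (hA measurableSet_Ici).inter (hB measurableSet_Iic)
    rw [hset, measure_union hdisj hm2,
      hInd.measure_inter_preimage_eq_mul _ _ measurableSet_Iic measurableSet_Ici,
      hInd.measure_inter_preimage_eq_mul _ _ measurableSet_Ici measurableSet_Iic,
      hBs _ measurableSet_Ici, hBs _ measurableSet_Iic, hIci,
      ENNReal.toReal_add (ENNReal.mul_ne_top (measure_ne_top _ _)
        (ENNReal.sub_ne_top ENNReal.one_ne_top))
        (ENNReal.mul_ne_top (ENNReal.sub_ne_top ENNReal.one_ne_top) (measure_ne_top _ _)),
      ENNReal.toReal_mul, ENNReal.toReal_mul, hFeq, hsub]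
    ring
  · -- 0 ≤ x
    push_neg at hx
    have hset : {ω | C ω ≤ x} =
        ((A ⁻¹' Set.Ioi x ∩ B ⁻¹' Set.Ioi x) ∪ (A ⁻¹' Set.Iio (-x) ∩ B ⁻¹' Set.Iio (-x)))ᶜ := by
      ext ω
      simp only [Set.mem_setOf_eq, hC, Set.mem_compl_iff, Set.mem_union, Set.mem_inter_iff,
        Set.mem_preimage, Set.mem_Ioi, Set.mem_Iio]
      rw [← not_lt]
      exact not_congr (Qgt_nonneg' _ _ _ hx)
    have hm1 : MeasurableSet (A ⁻¹' Set.Ioi x ∩ B ⁻¹' Set.Ioi x) :=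
      (hA measurableSet_Ioi).inter (hB measurableSet_Ioi)
    have hm2 : MeasurableSet (A ⁻¹' Set.Iio (-x) ∩ B ⁻¹' Set.Iio (-x)) :=
      (hA measurableSet_Iio).inter (hB measurableSet_Iio)
    have hdisj : Disjoint (A ⁻¹' Set.Ioi x ∩ B ⁻¹' Set.Ioi x)
        (A ⁻¹' Set.Iio (-x) ∩ B ⁻¹' Set.Iio (-x)) := by
      rw [Set.disjoint_left]
      rintro ω ⟨h1, h2⟩ ⟨h3, h4⟩
      simp only [Set.mem_preimage, Set.mem_Ioi, Set.mem_Iio] at h1 h3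
      linarith
    have hIoi : μ (A ⁻¹' Set.Ioi x) = 1 - μ (A ⁻¹' Set.Iic x) := by
      rw [← Set.compl_Iic, Set.preimage_compl,
        measure_compl (hA measurableSet_Iic) (measure_ne_top _ _), measure_univ]
    rw [hset, measure_compl (hm1.union hm2) (measure_ne_top _ _), measure_univ,
      ENNReal.toReal_sub_of_le prob_le_one ENNReal.one_ne_top, ENNReal.toReal_one,
      measure_union hdisj hm2,
      hInd.measure_inter_preimage_eq_mul _ _ measurableSet_Ioi measurableSet_Ioi,
      hInd.measure_inter_preimage_eq_mul _ _ measurableSet_Iio measurableSet_Iio,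
      hBs _ measurableSet_Ioi, hBs _ measurableSet_Iio, hIoi, hIio,
      ENNReal.toReal_add (ENNReal.mul_ne_top (ENNReal.sub_ne_top ENNReal.one_ne_top)
        (ENNReal.sub_ne_top ENNReal.one_ne_top))
        (ENNReal.mul_ne_top (measure_ne_top _ _) (measure_ne_top _ _)),
      ENNReal.toReal_mul, ENNReal.toReal_mul, hFeq, hsub]
    ring
end

section
/- Let F : ℝ → [0,1] be a continuous CDF and define G(x) = 2F(x)(1-F(-x)) for x < 0 and G(x) = 2F(x) - F(-x)² - F(x)² for x ≥ 0. Then G is a valid CDF: it is non-decreasing, right-continuous, G(x) → 0 as x → -∞, and G(x) → 1 as x → +∞. -/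
/-- The min-sum density-evolution formula (18) yields a valid CDF: if `F` is a
continuous CDF then `G` (defined piecewise from `F`) is non-decreasing,
right-continuous, and has limits 0 at `-∞` and 1 at `+∞`. -/
theorem stmt_18 (F : ℝ → ℝ) (hCont : Continuous F) (hMono : Monotone F)
    (hBot : Filter.Tendsto F Filter.atBot (nhds 0))
    (hTop : Filter.Tendsto F Filter.atTop (nhds 1))
    (G : ℝ → ℝ)
    (hG : ∀ x, G x = if x < 0 then 2 * F x * (1 - F (-x))
        else 2 * F x - F (-x) ^ 2 - F x ^ 2) :
    Monotone G ∧ (∀ x : ℝ, ContinuousWithinAt G (Set.Ici x) x) ∧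
      Filter.Tendsto G Filter.atBot (nhds 0) ∧
      Filter.Tendsto G Filter.atTop (nhds 1) := by
  have h0 : ∀ x, 0 ≤ F x := fun x =>
    le_of_tendsto hBot (Filter.eventually_atBot.mpr ⟨x, fun y hy => hMono hy⟩)
  have h1 : ∀ x, F x ≤ 1 := fun x =>
    ge_of_tendsto hTop (Filter.eventually_atTop.mpr ⟨x, fun y hy => hMono hy⟩)
  set A : ℝ → ℝ := fun x => 2 * F x * (1 - F (-x)) with hA
  set B : ℝ → ℝ := fun x => 2 * F x - F (-x) ^ 2 - F x ^ 2 with hB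
  have hAmono : Monotone A := by
    intro x y hxy
    have h2 : F x ≤ F y := hMono hxy
    have h3 : F (-y) ≤ F (-x) := hMono (neg_le_neg hxy)
    have := h0 x; have := h0 (-y); have := h1 (-x)
    simp only [hA]
    nlinarith
  have hBmono : Monotone B := by
    intro x y hxy
    have h2 : F x ≤ F y := hMono hxy
    have h3 : F (-y) ≤ F (-x) := hMono (neg_le_neg hxy)
    have := h0 (-y); have := h1 x; have := h1 y; have := h0 x
    simp only [hB]
    nlinarith
  have hAB0 : A 0 = B 0 := by simp only [hA, hB, neg_zero]; ring
  have hGmono : Monotone G := by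
    intro x y hxy
    rw [hG x, hG y]
    show (if x < 0 then A x else B x) ≤ (if y < 0 then A y else B y)
    rcases lt_or_ge x 0 with hx | hx <;> rcases lt_or_ge y 0 with hy | hy
    · rw [if_pos hx, if_pos hy]; exact hAmono hxy
    · rw [if_pos hx, if_neg (not_lt.mpr hy)]
      calc A x ≤ A 0 := hAmono hx.le
        _ = B 0 := hAB0
        _ ≤ B y := hBmono hy
    · exact absurd (hxy.trans_lt hy) (not_lt.mpr hx)
    · rw [if_neg (not_lt.mpr hx), if_neg (not_lt.mpr hy)]; exact hBmono hxy
  have hGeq : G = fun x => if x < 0 then A x else B x := funext hG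
  have hGc : Continuous G := by
    have hG' : G = fun x => if (0:ℝ) ≤ x then B x else A x := by
      rw [hGeq]
      funext x
      rcases lt_or_ge x 0 with hx | hx
      · rw [if_pos hx, if_neg (not_le.mpr hx)]
      · rw [if_neg (not_lt.mpr hx), if_pos hx]
    rw [hG']
    apply Continuous.if_le (by fun_prop) (by fun_prop) continuous_const continuous_id
    intro x hx
    have : x = 0 := (show (0:ℝ) = x from hx).symm
    rw [this]
    exact hAB0.symm
  refine ⟨hGmono, fun x => (hGc.continuousAt).continuousWithinAt, ?_, ?_⟩
  · have hFneg : Filter.Tendsto (fun x : ℝ => F (-x)) Filter.atBot (nhds 1) :=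
      hTop.comp Filter.tendsto_neg_atBot_atTop
    have hAtend : Filter.Tendsto A Filter.atBot (nhds 0) := by
      have h : Filter.Tendsto (fun x => 2 * F x * (1 - F (-x))) Filter.atBot
          (nhds (2 * 0 * (1 - 1))) :=
        (hBot.const_mul 2).mul (tendsto_const_nhds.sub hFneg)
      simpa using h
    refine hAtend.congr' ?_
    filter_upwards [Filter.eventually_lt_atBot (0 : ℝ)] with x hx
    rw [hG x, if_pos hx]
  · have hFneg : Filter.Tendsto (fun x : ℝ => F (-x)) Filter.atTop (nhds 0) :=
      hBot.comp Filter.tendsto_neg_atTop_atBot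
    have hBtend : Filter.Tendsto B Filter.atTop (nhds 1) := by
      have h : Filter.Tendsto (fun x => 2 * F x - F (-x) ^ 2 - F x ^ 2) Filter.atTop
          (nhds (2 * 1 - 0 ^ 2 - 1 ^ 2)) :=
        ((hTop.const_mul 2).sub (hFneg.pow 2)).sub (hTop.pow 2)
      have e : (1:ℝ) = 2 * 1 - 0 ^ 2 - 1 ^ 2 := by norm_num
      rw [e]
      exact h
    refine hBtend.congr' ?_
    filter_upwards [Filter.eventually_ge_atTop (0 : ℝ)] with x hx
    rw [hG x, if_neg (not_lt.mpr hx)]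
end
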